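/- (Diaconis–Shahshahani upper bound lemma for finite abelian groups) Let A be a finite abelian group, P a probability distribution on A, and U the uniform distribution on A. Then ‖P − U‖_TV² ≤ (1/4) Σ_{χ ≠ χ₀} |P̂(χ)|², where the sum is over nontrivial characters χ of A, P̂(χ) = Σ_{g∈A} χ(g) P(g), and ‖P − U‖_TV = (1/2) Σ_{g∈A} |P(g) − U(g)|. -/

import Mathlib

/-!
Let `f = P - U`. Since a nontrivial character sums to zero over `A`, `f̂(χ) = P̂(χ)` for
`χ ≠ χ₀`, while `f̂(χ₀) = ∑ f = 0`. Parseval's identity then turns the right-hand side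
into `|A| / 4 · ∑ |f|²`, and Cauchy–Schwarz gives `(∑ |f|)² ≤ |A| · ∑ |f|²`.
-/

open scoped Classical

open Finset ComplexConjugate

namespace AddChar

variable {A : Type*} [AddCommGroup A] [Fintype A]

lemma norm_sum_mul_sq (ψ : AddChar A ℂ) (f : A → ℂ) :
    ((‖∑ g, ψ g * f g‖ ^ 2 : ℝ) : ℂ) = ∑ g, ∑ h, ψ (g - h) * (f g * conj (f h)) := by
  rw [Complex.ofReal_pow, ← Complex.mul_conj', map_sum, sum_mul_sum]
  refine sum_congr rfl fun g _ => sum_congr rfl fun h _ => ?_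
  rw [map_mul, ← map_neg_eq_conj, sub_eq_add_neg, map_add_eq_mul]
  ring

/-- Parseval's identity. -/
lemma sum_norm_sum_mul_sq (f : A → ℂ) :
    ∑ χ : AddChar A ℂ, ‖∑ g, χ g * f g‖ ^ 2 = Fintype.card A * ∑ g, ‖f g‖ ^ 2 := by
  apply Complex.ofReal_injective
  push_cast
  simp_rw [← Complex.ofReal_pow, norm_sum_mul_sq, Complex.ofReal_pow, ← Complex.mul_conj']
  rw [sum_comm]
  simp_rw [sum_comm (γ := AddChar A ℂ), ← sum_mul, sum_apply_eq_ite, sub_eq_zero, ite_mul,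
    zero_mul, sum_ite_eq, mem_univ, if_true, mul_sum]

lemma sum_mul_sub_const {ψ : AddChar A ℂ} (hψ : ψ ≠ 1) (f : A → ℂ) (c : ℂ) :
    ∑ g, ψ g * (f g - c) = ∑ g, ψ g * f g := by
  have hψ_sum : ∑ g, ψ g = 0 := sum_eq_zero_iff_ne_zero.2 hψ
  simp_rw [mul_sub, sum_sub_distrib, ← sum_mul, hψ_sum, zero_mul, sub_zero]

/-- Parseval's identity for `f` minus its mean, whose trivial Fourier coefficient vanishes. -/
lemma sum_ne_one_norm_sum_mul_sq (f : A → ℂ) :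
    ∑ χ : AddChar A ℂ, (if χ = 1 then 0 else ‖∑ g, χ g * f g‖ ^ 2) =
      Fintype.card A * ∑ g, ‖f g - (∑ h, f h) / Fintype.card A‖ ^ 2 := by
  rw [← sum_norm_sum_mul_sq]
  refine sum_congr rfl fun χ _ => ?_
  split_ifs with hχ
  · have hcard : (Fintype.card A : ℂ) ≠ 0 := by simp
    simp [hχ, sum_sub_distrib, mul_div_cancel₀ _ hcard]
  · rw [sum_mul_sub_const hχ]

end AddChar

theorem diaconis_shahshahani_general {A : Type*} [AddCommGroup A] [Fintype A]
    (P : A → ℝ) (hPsum : ∑ g, P g = 1) :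
    ((1 : ℝ) / 2 * ∑ g, |P g - 1 / Fintype.card A|) ^ 2 ≤
      (1 : ℝ) / 4 * ∑ χ : AddChar A ℂ,
        if χ = 1 then 0 else ‖∑ g, χ g * P g‖ ^ 2 := by
  set d : A → ℝ := fun g => ‖(P g : ℂ) - (∑ h, (P h : ℂ)) / Fintype.card A‖
  have hd : ∀ g, |P g - 1 / Fintype.card A| = d g := fun g => by
    simp only [d]
    rw [← Complex.ofReal_sum, hPsum, ← Complex.ofReal_natCast, ← Complex.ofReal_div,
      ← Complex.ofReal_sub, Complex.norm_real, Real.norm_eq_abs]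
  calc ((1 : ℝ) / 2 * ∑ g, |P g - 1 / Fintype.card A|) ^ 2
      = 1 / 4 * (∑ g, d g) ^ 2 := by simp_rw [hd]; ring
    _ ≤ 1 / 4 * (Fintype.card A * ∑ g, d g ^ 2) := by
      gcongr; exact sq_sum_le_card_mul_sum_sq
    _ = _ := by rw [AddChar.sum_ne_one_norm_sum_mul_sq]

/-- Diaconis–Shahshahani upper bound lemma: for a probability distribution `P`
on a finite abelian group `A` with uniform distribution `U`,
`‖P − U‖_TV² ≤ (1/4) Σ_{χ ≠ χ₀} |P̂(χ)|²`, the sum over nontrivial characters. -/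
theorem diaconis_shahshahani {A : Type*} [AddCommGroup A] [Fintype A]
    (P : A → ℝ) (hP : ∀ g, 0 ≤ P g) (hPsum : ∑ g, P g = 1) :
    ((1 : ℝ) / 2 * ∑ g, |P g - 1 / Fintype.card A|) ^ 2 ≤
      (1 : ℝ) / 4 * ∑ χ : AddChar A ℂ,
        if χ = 1 then 0 else ‖∑ g, χ g * P g‖ ^ 2 :=
  diaconis_shahshahani_general P hPsum
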